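/- Under the stated assumptions, for all sufficiently large N one has (1/N)·∑_{n≤N} ∑_{2≤m≤N−n+1} 1[g_n + g_{n+1} + ⋯ + g_{n+m−1} ∈ (1/2, 3/2 + ε)] ≤ 2√ε. (Here 1[·] is the indicator of the stated event.) -/

import Mathlib

/-
Pair correlations on the window `(1/2, 3/2 + ε]` count about `(1 + ε) N` ordered pairs. Each gap
`g_n > 1/2` is such a pair `(n, n + 1)`, so the pairs `(n, n + m)` with `m ≥ 2` number at most
`(1 + ε) N - #{n ≤ N | g_n > 1/2} + o(N)`, and it suffices to show that few gaps are `≤ 1/2`.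
Pair correlations on the tails `(1/2 + x, 3/2 + ε]` also say that the gaps above `1/2` cannot
cluster: at most about `(1 + ε - x) N` of them exceed `1/2 + x`. So `C` such gaps sum to at most
`C/2 + (1 + ε) C - C² / (2N)`, the value when they fill the top of the window with density one,
while the `s = N - C` others sum to at most `s/2`. Average gap `1` then forces
`s² ≤ (2ε + o(1)) N²`, and `ε + √(2ε) < 2√ε`.
-/

open Finset Filter Topology

/- A discrete `∫₀ᴷ min C (x B) dx = K C - C² / (2B)`: each term is bounded by telescoping against
`max (C - x B) 0 ^ 2 / (2B)`. -/
theorem sum_range_min_mul_le {B C : ℝ} (K : ℕ) (hB : 0 < B) (hC : 0 ≤ C) (hCK : C ≤ K * B) :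
    ∑ j ∈ range K, min C (j * B) ≤ K * C - C ^ 2 / (2 * B) := by
  set f : ℝ → ℝ := fun x => max (C - x * B) 0 ^ 2 / (2 * B) with hf
  have step (x : ℝ) : min C (x * B) ≤ C + (f (x + 1) - f x) := by
    rcases le_or_gt C (x * B) with hle | hlt
    · have : 0 ≤ f (x + 1) := by positivity
      simp only [hf, hle, min_eq_left, max_eq_right (sub_nonpos.2 hle)] at this ⊢
      norm_num [this]
    · set d := C - x * B
      set a := max (C - (x + 1) * B) 0
      have ha : d ^ 2 - a ^ 2 ≤ 2 * B * d := by
        rcases le_or_gt d (2 * B) with hd | hd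
        · nlinarith [sq_nonneg a]
        · have : d - B ≤ a := by linarith [le_max_left (C - (x + 1) * B) 0]
          nlinarith
      have : (d ^ 2 - a ^ 2) / (2 * B) ≤ d := by rw [div_le_iff₀ (by positivity)]; linarith
      simp only [hf, max_eq_left (sub_nonneg.2 hlt.le), min_eq_right hlt.le]
      rw [sub_div] at this
      linarith
  calc ∑ j ∈ range K, min C (j * B) ≤ ∑ j ∈ range K, (C + (f ↑(j + 1) - f j)) :=
        sum_le_sum fun j _ => by push_cast; exact step j
    _ = K * C + (f K - f 0) := by rw [sum_add_distrib, sum_range_sub (fun j : ℕ => f j)]; simp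
    _ = K * C - C ^ 2 / (2 * B) := by
        simp [hf, max_eq_right (sub_nonpos.2 hCK), max_eq_left hC]; ring

theorem le_mul_card_filter_mul_lt {x δ : ℝ} {k : ℕ} (hδ : 0 < δ) (hx : x ≤ k * δ) :
    x ≤ δ * #{t ∈ range k | ((t : ℕ) : ℝ) * δ < x} := by
  rcases le_or_gt x 0 with hx0 | hx0
  · exact hx0.trans (by positivity)
  have hceil : ⌈x / δ⌉₊ ≤ #{t ∈ range k | ((t : ℕ) : ℝ) * δ < x} := by
    rw [← card_range ⌈x / δ⌉₊]
    refine card_le_card fun t ht => ?_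
    have htx : (t : ℝ) < x / δ := Nat.lt_ceil.1 (mem_range.1 ht)
    have hk : ⌈x / δ⌉₊ ≤ k := Nat.ceil_le.2 ((div_le_iff₀ hδ).2 hx)
    simp only [mem_filter, mem_range]
    exact ⟨(mem_range.1 ht).trans_le hk, (lt_div_iff₀ hδ).1 htx⟩
  calc x = δ * (x / δ) := by field_simp
    _ ≤ δ * ⌈x / δ⌉₊ := by gcongr; exact Nat.le_ceil _
    _ ≤ δ * #{t ∈ range k | ((t : ℕ) : ℝ) * δ < x} := by gcongr

theorem sum_le_of_card_filter_mul_lt_le {ι : Type*} (s : Finset ι) (x : ι → ℝ) {k : ℕ}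
    {δ B : ℝ} (hδ : 0 < δ) (hB : 0 < B) (hx : ∀ i ∈ s, x i ≤ k * δ)
    (htail : ∀ t < k, (#{i ∈ s | t * δ < x i} : ℝ) ≤ (k - t) * B)
    (hs : #s ≤ (k + 1) * B) :
    ∑ i ∈ s, x i ≤ δ * ((k + 1) * #s - #s ^ 2 / (2 * B)) := by
  calc ∑ i ∈ s, x i ≤ ∑ i ∈ s, δ * #{t ∈ range k | ((t : ℕ) : ℝ) * δ < x i} :=
        sum_le_sum fun i hi => le_mul_card_filter_mul_lt hδ (hx i hi)
    _ = δ * ∑ t ∈ range k, (#{i ∈ s | t * δ < x i} : ℝ) := by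
        rw [← mul_sum]
        congr 1
        exact_mod_cast sum_card_bipartiteAbove_eq_sum_card_bipartiteBelow
          (s := s) (t := range k) (r := fun i (t : ℕ) => (t : ℝ) * δ < x i)
    _ ≤ δ * ∑ t ∈ range k, min (#s : ℝ) (((k - 1 - t : ℕ) + 1 : ℕ) * B) := by
        gcongr with t ht
        have htk := mem_range.1 ht
        refine le_min (mod_cast card_filter_le _ _) ?_
        rw [show k - 1 - t + 1 = k - t by omega, Nat.cast_sub htk.le]
        exact htail t htk
    _ = δ * ∑ j ∈ range (k + 1), min (#s : ℝ) (j * B) := by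
        rw [sum_range_reflect (fun j => min (#s : ℝ) ((j + 1 : ℕ) * B)) k, sum_range_succ']
        simp
    _ ≤ δ * ((k + 1) * #s - #s ^ 2 / (2 * B)) := by
        have := sum_range_min_mul_le (k + 1) hB (Nat.cast_nonneg #s) (mod_cast hs)
        push_cast at this
        gcongr

theorem le_of_mass_le {n S δ : ℝ} (hn : 0 < n) (hδ : 0 ≤ δ)
    (hδ' : δ ≤ 2 / 10 ^ 10)
    (hmass : (1 - 1 / 10 ^ 10) * n
      ≤ n / 2 + (1 + 1 / 10 ^ 9 + δ) * (n - S) - (n - S) ^ 2 / (2 * (1 + 1 / 10 ^ 10) * n)) :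
    S ≤ 6 / 10 ^ 5 * n := by
  have hquad := (div_le_iff₀ (by positivity : 0 < 2 * (1 + 1 / 10 ^ 10) * n)).1
    (show (n - S) ^ 2 / (2 * (1 + 1 / 10 ^ 10) * n)
      ≤ n / 2 + (1 + 1 / 10 ^ 9 + δ) * (n - S) - (1 - 1 / 10 ^ 10) * n by linarith)
  by_contra! hlt
  nlinarith [mul_lt_mul'' hlt hlt (by positivity) (by positivity)]

theorem le_card_filter_half_lt {ι : Type*} (s : Finset ι) (g : ι → ℝ) {k : ℕ} {δ : ℝ}
    (hδ : 0 < δ) (hδ' : δ ≤ 2 / 10 ^ 10) (hkδ : k * δ = 1 + 1 / 10 ^ 9)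
    (hg : ∀ i ∈ s, g i ≤ 1 / 2 + k * δ)
    (hmass : (1 - 1 / 10 ^ 10) * #s ≤ ∑ i ∈ s, g i)
    (htail : ∀ t < k,
      (#{i ∈ s | 1 / 2 + t * δ < g i} : ℝ) ≤ (k - t) * (δ * (1 + 1 / 10 ^ 10) * #s)) :
    (1 - 6 / 10 ^ 5) * #s ≤ (#{i ∈ s | 1 / 2 < g i} : ℝ) := by
  rcases s.eq_empty_or_nonempty with rfl | hne
  · simp
  set n : ℝ := (#s : ℝ)
  set B := δ * (1 + 1 / 10 ^ 10) * n
  set S : ℝ := (#{i ∈ s | g i ≤ 1 / 2} : ℝ)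
  set C : ℝ := (#{i ∈ s | 1 / 2 < g i} : ℝ)
  have hn : 0 < n := Nat.cast_pos.2 hne.card_pos
  have hB : 0 < B := by positivity
  have hSC : S + C = n := by
    simp only [S, C, n, ← not_le]
    exact_mod_cast card_filter_add_card_filter_not _
  have hsplit :
      ∑ i ∈ s, g i = ∑ i ∈ s with g i ≤ 1 / 2, g i + ∑ i ∈ s with 1 / 2 < g i, g i := by
    simp only [← not_le]
    exact (sum_filter_add_sum_filter_not _ _ _).symm
  have hsmall : ∑ i ∈ s with g i ≤ 1 / 2, g i ≤ S / 2 := by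
    have := sum_le_card_nsmul {i ∈ s | g i ≤ 1 / 2} g (1 / 2) fun i hi => (mem_filter.1 hi).2
    rw [nsmul_eq_mul] at this
    linarith
  have hbig :
      ∑ i ∈ s with 1 / 2 < g i, (g i - 1 / 2) ≤ δ * ((k + 1) * C - C ^ 2 / (2 * B)) := by
    refine sum_le_of_card_filter_mul_lt_le _ _ hδ hB
      (fun i hi => by linarith [hg i (mem_filter.1 hi).1]) (fun t ht => ?_) ?_
    · refine le_trans (Nat.cast_le.2 (card_le_card fun i hi => ?_)) (htail t ht)
      simp only [mem_filter] at hi ⊢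
      exact ⟨hi.1.1, by linarith [hi.2]⟩
    · rw [show (k + 1) * B = (k * δ + δ) * (1 + 1 / 10 ^ 10) * n by ring, hkδ]
      nlinarith [show (0 : ℝ) ≤ S by positivity]
  have hterm : δ * ((k + 1) * C - C ^ 2 / (2 * B))
      = (1 + 1 / 10 ^ 9 + δ) * C - C ^ 2 / (2 * (1 + 1 / 10 ^ 10) * n) := by
    rw [← hkδ]
    field_simp
    ring
  rw [sum_sub_distrib, sum_const, nsmul_eq_mul] at hbig
  have hS := le_of_mass_le (S := S) hn hδ.le hδ'
    (by rw [show n - S = C by linarith]; linarith)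
  linarith

open scoped Classical in
noncomputable def pairCount (lam : ℕ → ℝ) (N : ℕ) (I : Set ℝ) : ℕ :=
  #{p ∈ Icc 1 N ×ˢ Icc 1 N | p.1 ≠ p.2 ∧ lam p.2 - lam p.1 ∈ I}

theorem eventually_pairCount_succ_le {lam : ℕ → ℝ} {I : Set ℝ} {v c : ℝ}
    (h : Tendsto (fun N : ℕ => (pairCount lam N I : ℝ) / N) atTop (𝓝 v)) (hc : v < c) :
    ∀ᶠ N : ℕ in atTop, (pairCount lam (N + 1) I : ℝ) ≤ c * N := by
  have hsucc : Tendsto (fun N : ℕ => (pairCount lam (N + 1) I : ℝ) / (N + 1) * (1 + 1 / N))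
      atTop (𝓝 (v * (1 + 0))) := by
    refine Tendsto.mul ?_ (tendsto_one_div_atTop_nhds_zero_nat.const_add 1)
    exact_mod_cast h.comp (tendsto_add_atTop_nat 1)
  rw [add_zero, mul_one] at hsucc
  filter_upwards [hsucc.eventually_lt_const hc, eventually_gt_atTop 0] with N hN hN0
  have hN0 : (0 : ℝ) < N := by exact_mod_cast hN0
  rw [show (pairCount lam (N + 1) I : ℝ) / (N + 1) * (1 + 1 / N) = pairCount lam (N + 1) I / N by
    field_simp] at hN
  exact ((div_lt_iff₀ hN0).1 hN).le

open scoped Classical in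
theorem sum_ite_add_sum_ite_le_pairCount (lam : ℕ → ℝ) (N : ℕ) (I : Set ℝ) :
    ∑ n ∈ Icc 1 N, ((if lam (n + 1) - lam n ∈ I then (1 : ℝ) else 0) +
      ∑ m ∈ Icc 2 (N - n + 1), if lam (n + m) - lam n ∈ I then (1 : ℝ) else 0)
      ≤ pairCount lam (N + 1) I := by
  have hsplit : ∀ n ∈ Icc 1 N, ((if lam (n + 1) - lam n ∈ I then (1 : ℝ) else 0) +
      ∑ m ∈ Icc 2 (N - n + 1), if lam (n + m) - lam n ∈ I then (1 : ℝ) else 0)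
      = #{m ∈ Icc 1 (N - n + 1) | lam (n + m) - lam n ∈ I} := by
    intro n _
    rw [← insert_Icc_add_one_left_eq_Icc (by omega : 1 ≤ N - n + 1), ← sum_boole,
      sum_insert (by simp)]
    rfl
  rw [sum_congr rfl hsplit, ← Nat.cast_sum, ← card_sigma, pairCount]
  refine Nat.cast_le.2 (card_le_card_of_injOn (fun p => (p.1, p.1 + p.2)) ?_ ?_)
  · rintro ⟨n, m⟩ hnm
    simp only [coe_sigma, Set.mem_sigma_iff, mem_coe, mem_Icc, mem_filter] at hnm
    simp only [coe_filter, mem_product, mem_Icc, Set.mem_ofPred_eq]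
    exact ⟨by omega, by omega, hnm.2.2⟩
  · rintro ⟨n, m⟩ _ ⟨n', m'⟩ _ h
    simp only [Prod.mk.injEq] at h
    obtain ⟨rfl, h⟩ := h
    obtain rfl : m = m' := by omega
    rfl

open scoped Classical in
theorem card_filter_gap_mem_le_pairCount (lam : ℕ → ℝ) (N : ℕ) (I : Set ℝ) :
    (#{n ∈ Icc 1 N | lam (n + 1) - lam n ∈ I} : ℝ) ≤ pairCount lam (N + 1) I := by
  refine le_trans ?_ (sum_ite_add_sum_ite_le_pairCount lam N I)
  rw [← sum_boole]
  exact sum_le_sum fun n _ => le_add_of_nonneg_right (sum_nonneg fun m _ => by positivity)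

theorem sum_Icc_gap_eq {lam g : ℕ → ℝ} (hg : ∀ n, g n = lam (n + 1) - lam n) (n : ℕ)
    {m : ℕ} (hm : 1 ≤ m) : ∑ i ∈ Icc n (n + m - 1), g i = lam (n + m) - lam n := by
  rw [Icc_sub_one_right_eq_Ico_of_not_isMin (by simp; omega), sum_congr rfl fun i _ => hg i,
    sum_Ico_sub lam (by omega)]

open scoped Classical in
theorem sum_sum_ite_add_card_le_pairCount {lam g : ℕ → ℝ}
    (hg : ∀ n, g n = lam (n + 1) - lam n) {a b : ℝ} (hgap : ∀ n, 1 ≤ n → g n ≤ b) (N : ℕ) :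
    ∑ n ∈ Icc 1 N, ∑ m ∈ Icc 2 (N - n + 1),
        (if (∑ i ∈ Icc n (n + m - 1), g i) ∈ Set.Ioo a b then (1 : ℝ) else 0)
      + #{n ∈ Icc 1 N | a < g n} ≤ pairCount lam (N + 1) (Set.Ioc a b) := by
  refine le_trans ?_ (sum_ite_add_sum_ite_le_pairCount lam N _)
  rw [add_comm, ← sum_boole, ← sum_add_distrib]
  refine sum_le_sum fun n hn => add_le_add (le_of_eq ?_) (sum_le_sum fun m hm => ?_)
  · rw [← hg n]
    simp [hgap n (mem_Icc.1 hn).1]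
  · rw [sum_Icc_gap_eq hg n (by linarith [(mem_Icc.1 hm).1])]
    split_ifs with h₁ h₂ <;> first | exact absurd (Set.Ioo_subset_Ioc_self h₁) h₂ | norm_num

theorem eventually_le_card_filter_half_lt {lam g : ℕ → ℝ}
    (hg : ∀ n, g n = lam (n + 1) - lam n)
    (havg : Tendsto (fun N : ℕ => (∑ n ∈ Icc 1 N, g n) / N) atTop (𝓝 1))
    (hppc : ∀ a b : ℝ, a ≤ b →
      Tendsto (fun N : ℕ => (pairCount lam N (Set.Ioc a b) : ℝ) / N) atTop (𝓝 (b - a)))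
    (hgap : ∀ n, 1 ≤ n → g n ≤ 3 / 2 + 1 / 10 ^ 9) :
    ∀ᶠ N : ℕ in atTop, (1 - 6 / 10 ^ 5) * N ≤ (#{n ∈ Icc 1 N | 1 / 2 < g n} : ℝ) := by
  set k : ℕ := 10 ^ 10
  set δ : ℝ := (1 + 1 / 10 ^ 9) / k
  have hδ : 0 < δ := by positivity
  have hkδ : (k : ℝ) * δ = 1 + 1 / 10 ^ 9 := mul_div_cancel₀ _ (by norm_num [k])
  have hgap' (n : ℕ) (hn : 1 ≤ n) : g n ≤ 1 / 2 + k * δ := by linarith [hgap n hn]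
  have htails : ∀ᶠ N : ℕ in atTop, ∀ t ∈ range k,
      (pairCount lam (N + 1) (Set.Ioc (1 / 2 + t * δ) (1 / 2 + k * δ)) : ℝ)
        ≤ (k - t) * (δ * (1 + 1 / 10 ^ 10)) * N := by
    refine (eventually_all_finset _).2 fun t ht => ?_
    have htk : (t : ℝ) < k := by exact_mod_cast mem_range.1 ht
    refine eventually_pairCount_succ_le (hppc _ _ (by gcongr)) ?_
    nlinarith [mul_pos (mul_pos (sub_pos.2 htk) hδ) (by norm_num : (0 : ℝ) < 1 / 10 ^ 10)]
  filter_upwards [havg.eventually_const_lt (show (1 - 1 / 10 ^ 10 : ℝ) < 1 by norm_num), htails,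
    eventually_gt_atTop 0] with N hmass htail hN
  have hN' : (0 : ℝ) < N := by exact_mod_cast hN
  have hcardN : (#(Icc 1 N) : ℝ) = N := by simp
  rw [← hcardN]
  refine le_card_filter_half_lt (Icc 1 N) g (k := k) hδ (by norm_num [δ, k]) hkδ
    (fun i hi => hgap' i (mem_Icc.1 hi).1)
    (by rw [hcardN]; exact ((lt_div_iff₀ hN').1 hmass).le) fun t ht => ?_
  rw [hcardN, ← mul_assoc]
  refine le_trans (Nat.cast_le.2 (card_le_card fun i hi => ?_))
    ((card_filter_gap_mem_le_pairCount lam N _).trans (htail t (mem_range.2 ht)))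
  simp only [mem_filter] at hi ⊢
  rw [← hg]
  exact ⟨hi.1, hi.2, hgap' i (mem_Icc.1 hi.1).1⟩

open scoped Classical in
theorem stmt_2_general (lam : ℕ → ℝ) (g : ℕ → ℝ) (hgdef : ∀ n, g n = lam (n + 1) - lam n)
    (havg : Tendsto (fun N : ℕ => (∑ n ∈ Finset.Icc 1 N, g n) / N) atTop (nhds 1))
    (hppc : ∀ I : Set ℝ, I.OrdConnected → Bornology.IsBounded I →
      Tendsto (fun N : ℕ =>
          (((Finset.Icc 1 N ×ˢ Finset.Icc 1 N).filter
            (fun p => p.1 ≠ p.2 ∧ lam p.2 - lam p.1 ∈ I)).card : ℝ) / N)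
        atTop (nhds (MeasureTheory.volume I).toReal))
    (ε : ℝ) (hε : ε = 1 / 10 ^ 9)
    (hgap : ∀ n, 1 ≤ n → g n ≤ 3 / 2 + ε) :
    ∀ᶠ N : ℕ in atTop,
      (∑ n ∈ Finset.Icc 1 N, ∑ m ∈ Finset.Icc 2 (N - n + 1),
          (if (∑ i ∈ Finset.Icc n (n + m - 1), g i) ∈ Set.Ioo (1 / 2 : ℝ) (3 / 2 + ε)
            then (1 : ℝ) else 0)) / N
        ≤ 2 * Real.sqrt ε := by
  subst hε
  have hppc' (a b : ℝ) (hab : a ≤ b) :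
      Tendsto (fun N : ℕ => (pairCount lam N (Set.Ioc a b) : ℝ) / N) atTop (𝓝 (b - a)) := by
    have h := hppc _ Set.ordConnected_Ioc (Metric.isBounded_Ioc a b)
    rwa [Real.volume_Ioc, ENNReal.toReal_ofReal (sub_nonneg.2 hab)] at h
  have hwindow := eventually_pairCount_succ_le (hppc' (1 / 2) (3 / 2 + 1 / 10 ^ 9) (by norm_num))
    (show 3 / 2 + 1 / 10 ^ 9 - 1 / 2 < 1 + 1 / 10 ^ 9 + 1 / 10 ^ 7 by norm_num)
  have hsqrt : (61 / 10 ^ 6 : ℝ) ≤ 2 * √(1 / 10 ^ 9) := by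
    have : (305 / 10 ^ 7 : ℝ) ≤ √(1 / 10 ^ 9) := Real.le_sqrt_of_sq_le (by norm_num)
    linarith
  filter_upwards [hwindow, eventually_le_card_filter_half_lt hgdef havg hppc' hgap,
    eventually_gt_atTop 0] with N hwindow hbig hN
  have hcount := sum_sum_ite_add_card_le_pairCount hgdef (a := 1 / 2) hgap N
  rw [div_le_iff₀ (by exact_mod_cast hN)]
  linarith [mul_le_mul_of_nonneg_right hsqrt (Nat.cast_nonneg N)]

open scoped Classical in
/-- Let `(λ_n)` be strictly increasing with average gap `1` and Poisson pair correlations,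
let `ε = 10⁻⁹`, and suppose `g n := λ_{n+1} − λ_n ≤ 3/2 + ε` for all `n ≥ 1`. Then for all
sufficiently large `N`,
`(1/N)·∑_{n≤N} ∑_{2≤m≤N−n+1} 1[g_n + ⋯ + g_{n+m−1} ∈ (1/2, 3/2+ε)] ≤ 2√ε`. -/
theorem stmt_2 (lam : ℕ → ℝ) (g : ℕ → ℝ) (hgdef : ∀ n, g n = lam (n + 1) - lam n)
    (hmono : ∀ n, 1 ≤ n → lam n < lam (n + 1))
    (havg : Tendsto (fun N : ℕ => (∑ n ∈ Finset.Icc 1 N, g n) / N) atTop (nhds 1))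
    (hppc : ∀ I : Set ℝ, I.OrdConnected → Bornology.IsBounded I →
      Tendsto (fun N : ℕ =>
          (((Finset.Icc 1 N ×ˢ Finset.Icc 1 N).filter
            (fun p => p.1 ≠ p.2 ∧ lam p.2 - lam p.1 ∈ I)).card : ℝ) / N)
        atTop (nhds (MeasureTheory.volume I).toReal))
    (ε : ℝ) (hε : ε = 1 / 10 ^ 9)
    (hgap : ∀ n, 1 ≤ n → g n ≤ 3 / 2 + ε) :
    ∀ᶠ N : ℕ in atTop,
      (∑ n ∈ Finset.Icc 1 N, ∑ m ∈ Finset.Icc 2 (N - n + 1),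
          (if (∑ i ∈ Finset.Icc n (n + m - 1), g i) ∈ Set.Ioo (1 / 2 : ℝ) (3 / 2 + ε)
            then (1 : ℝ) else 0)) / N
        ≤ 2 * Real.sqrt ε :=
  stmt_2_general lam g hgdef havg hppc ε hε hgap
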